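/- Policy improvement: Let Q^π and V^π be the regularized value functions of policy π, defined by Q^π(s,a) = r(s,a) + γ E_{s'}[V^π(s')] and V^π(s) = E_{a~π(·|s)}[Q^π(s,a)] + Ω_s(π). If π' satisfies E_{a~π'(·|s)}[Q^π(s,a)] + Ω_s(π') ≥ E_{a~π(·|s)}[Q^π(s,a)] + Ω_s(π) for all s, then V^{π'}(s) ≥ V^π(s) for all s. -/
import Mathlib


open Finset

/-- Policy improvement: if π' is at least as good as π in the regularized
one-step lookahead with respect to Q^π, then V^{π'} ≥ V^π pointwise. -/
theorem regularized_policy_improvement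
    {S A : Type*} [Fintype S] [Fintype A] [Nonempty S] [Nonempty A]
    (p : S → A → S → ℝ) (hp0 : ∀ s a s', 0 ≤ p s a s')
    (hp1 : ∀ s a, ∑ s', p s a s' = 1)
    (π π' : S → A → ℝ)
    (hπ0 : ∀ s a, 0 ≤ π s a) (hπ1 : ∀ s, ∑ a, π s a = 1)
    (hπ'0 : ∀ s a, 0 ≤ π' s a) (hπ'1 : ∀ s, ∑ a, π' s a = 1)
    (r : S → A → ℝ) (Ωπ Ωπ' : S → ℝ)
    (γ : ℝ) (hγ0 : 0 ≤ γ) (hγ1 : γ < 1)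
    (Qπ : S → A → ℝ) (Vπ Vπ' : S → ℝ)
    (hQ : ∀ s a, Qπ s a = r s a + γ * ∑ s', p s a s' * Vπ s')
    (hV : ∀ s, Vπ s = (∑ a, π s a * Qπ s a) + Ωπ s)
    (hV' : ∀ s, Vπ' s = (∑ a, π' s a * r s a) + Ωπ' s
      + γ * ∑ a, π' s a * ∑ s', p s a s' * Vπ' s')
    (himp : ∀ s, (∑ a, π s a * Qπ s a) + Ωπ s ≤ (∑ a, π' s a * Qπ s a) + Ωπ' s) :
    ∀ s, Vπ s ≤ Vπ' s := by

  obtain ⟨s0, -, hs0⟩ := Finset.exists_min_image Finset.univ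
    (fun s => Vπ' s - Vπ s) ⟨Classical.arbitrary S, Finset.mem_univ _⟩
  set m := Vπ' s0 - Vπ s0 with hm
  have hs0' : ∀ s, m ≤ Vπ' s - Vπ s := fun s => hs0 s (Finset.mem_univ s)
  -- abbreviations
  set B := ∑ a, π' s0 a * ∑ s', p s0 a s' * Vπ s' with hB
  set B' := ∑ a, π' s0 a * ∑ s', p s0 a s' * Vπ' s' with hB'
  have h1 : ∑ a, π' s0 a * Qπ s0 a = (∑ a, π' s0 a * r s0 a) + γ * B := by
    rw [hB, Finset.mul_sum, ← Finset.sum_add_distrib]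
    refine Finset.sum_congr rfl fun a _ => ?_
    rw [hQ]; ring
  have hgap : m ≤ B' - B := by
    have step1 : ∀ a, m ≤ (∑ s', p s0 a s' * Vπ' s') - (∑ s', p s0 a s' * Vπ s') := by
      intro a
      rw [← Finset.sum_sub_distrib]
      calc m = ∑ s', p s0 a s' * m := by rw [← Finset.sum_mul, hp1, one_mul]
        _ ≤ ∑ s', (p s0 a s' * Vπ' s' - p s0 a s' * Vπ s') := by
            refine Finset.sum_le_sum fun s' _ => ?_
            rw [← mul_sub]
            exact mul_le_mul_of_nonneg_left (hs0' s') (hp0 s0 a s')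
    calc m = ∑ a, π' s0 a * m := by rw [← Finset.sum_mul, hπ'1, one_mul]
      _ ≤ ∑ a, π' s0 a * ((∑ s', p s0 a s' * Vπ' s') - (∑ s', p s0 a s' * Vπ s')) := by
          refine Finset.sum_le_sum fun a _ => ?_
          exact mul_le_mul_of_nonneg_left (step1 a) (hπ'0 s0 a)
      _ = B' - B := by
          rw [hB, hB', ← Finset.sum_sub_distrib]
          refine Finset.sum_congr rfl fun a _ => ?_
          ring
  have key : γ * m ≤ m := by
    have h2 := himp s0
    have h3 := hV s0
    have h4 := hV' s0
    have h5 : γ * m ≤ γ * (B' - B) := mul_le_mul_of_nonneg_left hgap hγ0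
    nlinarith [h5]
  have hm0 : 0 ≤ m := by nlinarith
  intro s
  have := hs0' s
  linarith
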